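/- Let I be a finite set and m : 2^I → ℝ a distribution (0 ≤ m(x) ≤ 2^{-|I|}). For δ > 0 with ℓ = 1/δ ∈ ℕ, define U_i = {s : i·δ·2^{-|I|} < m(s) ≤ (i+1)·δ·2^{-|I|}} for i < ℓ, let K = {i < ℓ : |U_i|/2^{|I|} ≥ δ²}, and m' = Σ_{i∈K} i·δ·2^{-|I|}·χ_{U_i}. Then |m̄ − m̄'| ≤ 2δ, where m̄ = Σ_x m(x) and m̄' = Σ_x m'(x). -/
import Mathlib


open scoped Classical

/-- Discretization of a distribution: if `m` is a distribution on `2^I`,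
`ℓ = 1/δ ∈ ℕ`, `U_i = {s : i·δ·2^{-|I|} < m(s) ≤ (i+1)·δ·2^{-|I|}}`,
`K = {i < ℓ : |U_i|/2^{|I|} ≥ δ²}` and `m' = Σ_{i∈K} i·δ·2^{-|I|}·χ_{U_i}`,
then `|m̄ − m̄'| ≤ 2δ`. -/
theorem stmt18 {I : Type*} [Fintype I] (m : (I → ZMod 2) → ℝ)
    (hm0 : ∀ x, 0 ≤ m x) (hm1 : ∀ x, m x ≤ 1 / 2 ^ Fintype.card I)
    (δ : ℝ) (hδ : 0 < δ) (ℓ : ℕ) (hℓ : (ℓ : ℝ) = 1 / δ)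
    (U : ℕ → Finset (I → ZMod 2))
    (hU : ∀ i, U i = Finset.univ.filter (fun s =>
      (i : ℝ) * δ / 2 ^ Fintype.card I < m s ∧ m s ≤ ((i : ℝ) + 1) * δ / 2 ^ Fintype.card I))
    (Kset : Finset ℕ)
    (hK : Kset = (Finset.range ℓ).filter (fun i =>
      (δ ^ 2 : ℝ) ≤ ((U i).card : ℝ) / 2 ^ Fintype.card I)) :
    |(∑ x, m x) - ∑ i ∈ Kset, ((i : ℝ) * δ / 2 ^ Fintype.card I) * (U i).card| ≤ 2 * δ := by
  set n := Fintype.card I with hn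
  have hN : (0:ℝ) < 2 ^ n := by positivity
  have hℓδ : (ℓ:ℝ) * δ = 1 := by rw [hℓ]; field_simp
  have hmem : ∀ i x, x ∈ U i ↔
      ((i : ℝ) * δ / 2 ^ n < m x ∧ m x ≤ ((i : ℝ) + 1) * δ / 2 ^ n) := by
    intro i x; rw [hU]; simp
  have hdisj : ∀ i ∈ Finset.range ℓ, ∀ j ∈ Finset.range ℓ, i ≠ j → Disjoint (U i) (U j) := by
    intro i _ j _ hij
    rw [Finset.disjoint_left]
    intro x hxi hxj
    rw [hmem] at hxi hxj
    rcases hij.lt_or_gt with h | h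
    · have h1 : ((i:ℝ)+1) ≤ (j:ℝ) := by exact_mod_cast h
      have h2 : ((i:ℝ)+1) * δ / 2 ^ n ≤ (j:ℝ) * δ / 2 ^ n := by gcongr
      linarith [hxi.2, hxj.1]
    · have h1 : ((j:ℝ)+1) ≤ (i:ℝ) := by exact_mod_cast h
      have h2 : ((j:ℝ)+1) * δ / 2 ^ n ≤ (i:ℝ) * δ / 2 ^ n := by gcongr
      linarith [hxj.2, hxi.1]
  set B := (Finset.range ℓ).biUnion U with hB
  have hcover : ∀ x, x ∉ B → m x = 0 := by
    intro x hx
    by_contra h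
    have hpos : 0 < m x := (hm0 x).lt_of_ne (Ne.symm h)
    set t : ℝ := m x * 2 ^ n / δ with ht
    have htpos : 0 < t := by positivity
    have htle : t ≤ (ℓ:ℝ) := by
      rw [ht, div_le_iff₀ hδ]
      calc m x * 2 ^ n ≤ (1 / 2 ^ n) * 2 ^ n := by gcongr; exact hm1 x
        _ = 1 := by field_simp
        _ = (ℓ:ℝ) * δ := hℓδ.symm
    set i : ℕ := ⌈t⌉₊ - 1 with hi
    have hc1 : 1 ≤ ⌈t⌉₊ := Nat.one_le_ceil_iff.mpr htpos
    have hic : (i:ℝ) = (⌈t⌉₊ : ℝ) - 1 := by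
      rw [hi]; push_cast [hc1]; ring
    have hlt : (i:ℝ) < t := by
      have := Nat.ceil_lt_add_one htpos.le
      rw [hic]; linarith
    have hge : t ≤ (i:ℝ) + 1 := by
      rw [hic]; linarith [Nat.le_ceil t]
    have hiℓ : i < ℓ := by
      have h2 : ⌈t⌉₊ ≤ ℓ := Nat.ceil_le.mpr htle
      omega
    apply hx
    rw [hB, Finset.mem_biUnion]
    refine ⟨i, Finset.mem_range.mpr hiℓ, ?_⟩
    rw [hmem]
    constructor
    · exact (div_lt_iff₀ hN).mpr ((lt_div_iff₀ hδ).mp hlt)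
    · exact (le_div_iff₀ hN).mpr ((div_le_iff₀ hδ).mp hge)
  have hsum1 : ∑ x, m x = ∑ i ∈ Finset.range ℓ, ∑ x ∈ U i, m x := by
    rw [← Finset.sum_biUnion hdisj]
    exact (Finset.sum_subset (Finset.subset_univ B) (fun x _ hx => hcover x hx)).symm
  set S := ∑ i ∈ Finset.range ℓ, ((i:ℝ) * δ / 2 ^ n) * (U i).card with hS
  have hlow : S ≤ ∑ x, m x := by
    rw [hsum1, hS]
    apply Finset.sum_le_sum
    intro i _
    calc ((i:ℝ) * δ / 2 ^ n) * (U i).card = ∑ _x ∈ U i, ((i:ℝ) * δ / 2 ^ n) := by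
          rw [Finset.sum_const, nsmul_eq_mul]; ring
      _ ≤ ∑ x ∈ U i, m x := Finset.sum_le_sum fun x hx => ((hmem i x).mp hx).1.le
  have hcard : (∑ i ∈ Finset.range ℓ, ((U i).card : ℝ)) ≤ 2 ^ n := by
    have h1 : ∑ i ∈ Finset.range ℓ, (U i).card = B.card := (Finset.card_biUnion hdisj).symm
    have h2 : B.card ≤ 2 ^ n := by
      calc B.card ≤ Fintype.card (I → ZMod 2) := Finset.card_le_univ B
        _ = 2 ^ n := by simp [hn]
    calc (∑ i ∈ Finset.range ℓ, ((U i).card : ℝ)) = (B.card : ℝ) := by exact_mod_cast h1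
      _ ≤ (2:ℝ) ^ n := by exact_mod_cast h2
  have hhigh : ∑ x, m x ≤ S + δ := by
    rw [hsum1]
    have hstep : ∀ i ∈ Finset.range ℓ, ∑ x ∈ U i, m x ≤
        ((i:ℝ) * δ / 2 ^ n) * (U i).card + (δ / 2 ^ n) * (U i).card := by
      intro i _
      calc ∑ x ∈ U i, m x ≤ ∑ _x ∈ U i, (((i:ℝ)+1) * δ / 2 ^ n) :=
            Finset.sum_le_sum fun x hx => ((hmem i x).mp hx).2
        _ = ((i:ℝ) * δ / 2 ^ n) * (U i).card + (δ / 2 ^ n) * (U i).card := by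
            rw [Finset.sum_const, nsmul_eq_mul]; ring
    calc ∑ i ∈ Finset.range ℓ, ∑ x ∈ U i, m x
        ≤ ∑ i ∈ Finset.range ℓ, (((i:ℝ) * δ / 2 ^ n) * (U i).card + (δ / 2 ^ n) * (U i).card) :=
          Finset.sum_le_sum hstep
      _ = S + (δ / 2 ^ n) * ∑ i ∈ Finset.range ℓ, ((U i).card : ℝ) := by
          rw [Finset.sum_add_distrib, Finset.mul_sum]
      _ ≤ S + (δ / 2 ^ n) * 2 ^ n := by gcongr
      _ = S + δ := by field_simp
  set C := ∑ i ∈ Kset, ((i:ℝ) * δ / 2 ^ n) * (U i).card with hC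
  have hKsub : Kset ⊆ Finset.range ℓ := by rw [hK]; exact Finset.filter_subset _ _
  have hCS : C ≤ S := Finset.sum_le_sum_of_subset_of_nonneg hKsub (fun i _ _ => by positivity)
  have hSC : S ≤ C + δ := by
    have h1 : S - C = ∑ i ∈ Finset.range ℓ \ Kset, ((i:ℝ) * δ / 2 ^ n) * (U i).card := by
      rw [hS, hC, ← Finset.sum_sdiff hKsub]; ring
    have h2 : ∀ i ∈ Finset.range ℓ \ Kset, ((i:ℝ) * δ / 2 ^ n) * (U i).card ≤ δ ^ 2 := by
      intro i hi
      rw [Finset.mem_sdiff, hK, Finset.mem_filter, not_and] at hi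
      obtain ⟨hir, hnot⟩ := hi
      have hcard_lt : ((U i).card : ℝ) ≤ δ ^ 2 * 2 ^ n := by
        have h4 := not_le.mp (hnot hir)
        have := (div_lt_iff₀ hN).mp h4
        linarith
      have hiℓ : (i:ℝ) ≤ (ℓ:ℝ) := by
        exact_mod_cast (Finset.mem_range.mp hir).le
      calc ((i:ℝ) * δ / 2 ^ n) * (U i).card ≤ ((ℓ:ℝ) * δ / 2 ^ n) * (δ ^ 2 * 2 ^ n) := by
            gcongr
        _ = ((ℓ:ℝ) * δ) * δ ^ 2 := by field_simp
        _ = δ ^ 2 := by rw [hℓδ, one_mul]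
    have h3 : S - C ≤ (ℓ:ℝ) * δ ^ 2 := by
      rw [h1]
      calc ∑ i ∈ Finset.range ℓ \ Kset, ((i:ℝ) * δ / 2 ^ n) * (U i).card
          ≤ (Finset.range ℓ \ Kset).card • (δ ^ 2) := Finset.sum_le_card_nsmul _ _ _ h2
        _ = ((Finset.range ℓ \ Kset).card : ℝ) * δ ^ 2 := by rw [nsmul_eq_mul]
        _ ≤ (ℓ:ℝ) * δ ^ 2 := by
            gcongr
            exact_mod_cast (Finset.card_le_card (Finset.sdiff_subset)).trans (by simp)
      done
    have h4 : (ℓ:ℝ) * δ ^ 2 = δ := by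
      calc (ℓ:ℝ) * δ ^ 2 = ((ℓ:ℝ) * δ) * δ := by ring
        _ = δ := by rw [hℓδ, one_mul]
    linarith
  rw [abs_sub_le_iff]
  constructor <;> linarith
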